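/- arXiv:2404.19190 — 2 statements merged into one kernel-verified Lean document; each statement's English description precedes it below -/
import Mathlib

section
/- Let q be an odd prime power, h ∈ GF(q), h ≠ 0, 1, and consider in PG(2,q) the conics 𝒞 : X₀X₂ = X₁² and 𝒞_h : X₀X₂ = hX₁². For μ ∈ GF(q)*, the point P_μ = (hμ² : μ : 1) of 𝒞_h is an internal point of 𝒞 if and only if 1 - h is a non-square in GF(q). -/
/-!
A line through `P = (hμ² : μ : 1)` meeting `𝒞 : Q = X₀X₂ - X₁² = 0` in a single point `c` must be
the tangent at `c`, i.e. the polar `B(c, P)` of `Q` vanishes: otherwise `B(c, P) P - Q(P) c` is a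
second point of `𝒞` on the line. For `c` on `𝒞`, `c₂ B(c, P) - Q(c) = (c₁ - μc₂)² - (1 - h)μ²c₂²`,
so such a tangent exists only if `1 - h` is a square. Conversely, if `1 - h = y²` then the tangent
`t²X₀ - 2tX₁ + X₂ = 0` at `(1 : t : t²)` with `t = (1 + y)/(hμ)` passes through `P`.
-/

open Projectivization
open QuadraticMap (polar polar_comm polar_smul_left polar_smul_right)
open scoped LinearAlgebra.Projectivization

section Secant

variable {K V : Type*} [Field K] [AddCommGroup V] [Module K V] (Q : QuadraticMap K V K)

theorem QuadraticMap.map_rep_mk_eq_zero_iff {v : V} (hv : v ≠ 0) :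
    Q (Projectivization.mk K v hv).rep = 0 ↔ Q v = 0 := by
  obtain ⟨a, ha⟩ :=
    (mk_eq_mk_iff K _ v (rep_nonzero _) hv).mp (mk_rep (Projectivization.mk K v hv))
  rw [← ha, Units.smul_def, QuadraticMap.map_smul, smul_eq_mul, mul_eq_zero, or_iff_right]
  exact mul_ne_zero a.ne_zero a.ne_zero

theorem Projectivization.submodule_le_iff {p : ℙ K V} {W : Submodule K V} :
    p.submodule ≤ W ↔ p.rep ∈ W := by
  rw [submodule_eq, Submodule.span_singleton_le_iff_mem]

theorem Projectivization.submodule_mk_le_iff {v : V} (hv : v ≠ 0) {W : Submodule K V} :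
    (mk K v hv).submodule ≤ W ↔ v ∈ W := by
  rw [submodule_mk, Submodule.span_singleton_le_iff_mem]

/-- When `Q u = 0`, `Q (a • p + b • u) = a² Q p + a b polar Q u p`, which vanishes at
`(a, b) = (polar Q u p, -Q p)`: the second intersection of the line `⟨u, p⟩` with `Q = 0`. -/
def secantPoint (u p : V) : V := polar Q u p • p - Q p • u

theorem map_secantPoint {u : V} (hu : Q u = 0) (p : V) : Q (secantPoint Q u p) = 0 := by
  rw [secantPoint, sub_eq_add_neg, ← neg_smul, QuadraticMap.map_add (⇑Q), QuadraticMap.map_smul,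
    QuadraticMap.map_smul, hu, polar_smul_left, polar_smul_right, polar_comm Q p u]
  simp only [smul_eq_mul]
  ring

theorem smul_ne_secantPoint {u p : V} (hu : Q u = 0) (hp : Q p ≠ 0) (hup : polar Q u p ≠ 0)
    (a : K) : a • u ≠ secantPoint Q u p := by
  intro h
  have hpu : p = ((polar Q u p)⁻¹ * (a + Q p)) • u := by
    rw [mul_smul, add_smul, h, secantPoint, sub_add_cancel, smul_smul, inv_mul_cancel₀ hup,
      one_smul]
  apply hp
  rw [hpu, QuadraticMap.map_smul, hu, smul_zero]

theorem ncard_cone_inter_ne_one_of_polar_ne_zero {W : Submodule K V} {c : ℙ K V}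
    (hc : Q c.rep = 0) (hcW : c.rep ∈ W) {p : V} (hpW : p ∈ W) (hp : Q p ≠ 0)
    (hcp : polar Q c.rep p ≠ 0) :
    {x : ℙ K V | Q x.rep = 0 ∧ x.submodule ≤ W}.ncard ≠ 1 := by
  have hx : secantPoint Q c.rep p ≠ 0 := by
    simpa using (smul_ne_secantPoint Q hc hp hcp 0).symm
  intro h1
  obtain ⟨d, hd⟩ := Set.ncard_eq_one.mp h1
  have hcd : c = d := by
    rw [← Set.mem_singleton_iff, ← hd]
    exact ⟨hc, submodule_le_iff.mpr hcW⟩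
  have hxd : mk K _ hx = d := by
    rw [← Set.mem_singleton_iff, ← hd]
    refine ⟨(Q.map_rep_mk_eq_zero_iff hx).mpr (map_secantPoint Q hc p),
      (submodule_mk_le_iff hx).mpr ?_⟩
    exact W.sub_mem (W.smul_mem _ hpW) (W.smul_mem _ hcW)
  obtain ⟨a, ha⟩ := (mk_eq_mk_iff' K _ _ hx c.rep_nonzero).mp
    (hxd.trans (hcd.symm.trans (mk_rep c).symm))
  exact smul_ne_secantPoint Q hc hp hcp a ha

end Secant

section Conic

variable {F : Type*} [Field F]

def conicForm : QuadraticForm F (Fin 3 → F) := QuadraticMap.proj 0 2 - QuadraticMap.proj 1 1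

theorem conicForm_apply (v : Fin 3 → F) : conicForm v = v 0 * v 2 - v 1 ^ 2 := by
  simp [conicForm, QuadraticMap.proj_apply, sq]

theorem polar_conicForm (u v : Fin 3 → F) :
    polar conicForm u v = u 0 * v 2 + u 2 * v 0 - 2 * u 1 * v 1 := by
  simp only [polar, conicForm_apply, Pi.add_apply]
  ring

theorem setOf_rep_eq_setOf_conicForm :
    {p : ℙ F (Fin 3 → F) | p.rep 0 * p.rep 2 = p.rep 1 ^ 2} = {p | conicForm p.rep = 0} := by
  simp only [conicForm_apply, sub_eq_zero]

def tangentLine (t : F) : Submodule F (Fin 3 → F) :=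
  LinearMap.ker (QuadraticMap.polarBilin conicForm ![1, t, t ^ 2])

theorem mem_tangentLine_iff {t : F} {v : Fin 3 → F} :
    v ∈ tangentLine t ↔ t ^ 2 * v 0 - 2 * t * v 1 + v 2 = 0 := by
  rw [tangentLine, LinearMap.mem_ker, QuadraticMap.polarBilin_apply_apply, polar_conicForm]
  simp only [Matrix.cons_val]
  constructor <;> intro h <;> linear_combination h

theorem finrank_tangentLine (t : F) : Module.finrank F (tangentLine t) = 2 := by
  have hne : QuadraticMap.polarBilin conicForm ![1, t, t ^ 2] ≠ 0 := by
    intro h0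
    have := congrArg (fun f : Module.Dual F (Fin 3 → F) => f ![0, 0, 1]) h0
    simp [polar_conicForm] at this
  have := Module.Dual.finrank_ker_add_one_of_ne_zero hne
  rw [Module.finrank_fin_fun] at this
  exact Nat.succ_injective this

theorem eq_smul_of_mem_tangentLine {t : F} {v : Fin 3 → F} (hv : conicForm v = 0)
    (hvt : v ∈ tangentLine t) : v = v 0 • ![1, t, t ^ 2] := by
  rw [conicForm_apply] at hv
  rw [mem_tangentLine_iff] at hvt
  have h1 : v 1 = t * v 0 :=
    sub_eq_zero.mp (pow_eq_zero_iff two_ne_zero |>.mp (by linear_combination v 0 * hvt - hv))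
  ext i
  fin_cases i
  · simp
  · simp [h1, mul_comm]
  · simp
    linear_combination hvt + 2 * t * h1

theorem conic_inter_tangentLine (t : F) :
    {p : ℙ F (Fin 3 → F) | conicForm p.rep = 0 ∧ p.submodule ≤ tangentLine t} =
      {mk F ![1, t, t ^ 2] (by simp)} := by
  ext p
  simp only [Set.mem_ofPred_eq, Set.mem_singleton_iff]
  constructor
  · rintro ⟨hp, hpt⟩
    have hrep := eq_smul_of_mem_tangentLine hp (submodule_le_iff.mp hpt)
    rw [← mk_rep p, mk_eq_mk_iff']
    exact ⟨p.rep 0, hrep.symm⟩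
  · rintro rfl
    rw [QuadraticMap.map_rep_mk_eq_zero_iff, submodule_mk_le_iff, mem_tangentLine_iff,
      conicForm_apply]
    simp only [Matrix.cons_val]
    constructor <;> ring

theorem exists_sq_eq_one_sub_of_polar_eq_zero {h μ : F} (hμ : μ ≠ 0) {u : Fin 3 → F}
    (hu0 : u ≠ 0) (hu : conicForm u = 0) (huP : polar conicForm u ![h * μ ^ 2, μ, 1] = 0) :
    ∃ y, y ^ 2 = 1 - h := by
  rw [conicForm_apply] at hu
  rw [polar_conicForm] at huP
  simp only [Matrix.cons_val] at huP
  have hu2 : u 2 ≠ 0 := by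
    intro hu2
    have hu1 : u 1 = 0 := by simpa [hu2] using hu
    apply hu0
    ext i
    fin_cases i <;> simp_all
  refine ⟨(u 1 - μ * u 2) / (μ * u 2), ?_⟩
  field_simp
  linear_combination u 2 * huP - hu

end Conic

theorem stmt11
    (F : Type*) [Field F]
    (C : Set (Projectivization F (Fin 3 → F)))
    (hC : C = {p : Projectivization F (Fin 3 → F) | p.rep 0 * p.rep 2 = p.rep 1 ^ 2})
    (h μ : F) (hh0 : h ≠ 0) (hh1 : h ≠ 1) (hμ : μ ≠ 0)
    (P : Projectivization F (Fin 3 → F))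
    (hPdef : P = Projectivization.mk F ![h * μ ^ 2, μ, 1]
      (by intro hv; simpa using congrFun hv 2)) :
    ((P ∉ C) ∧ ∀ W : Submodule F (Fin 3 → F), Module.finrank F W = 2 →
        {p | p ∈ C ∧ p.submodule ≤ W}.ncard = 1 → ¬ P.submodule ≤ W) ↔
      ¬ ∃ y : F, y ^ 2 = 1 - h := by
  subst hC hPdef
  simp only [setOf_rep_eq_setOf_conicForm, Set.mem_ofPred_eq, submodule_mk_le_iff,
    QuadraticMap.map_rep_mk_eq_zero_iff]
  constructor
  · rintro ⟨-, hinternal⟩ ⟨y, hy⟩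
    refine hinternal (tangentLine ((1 + y) / (h * μ))) (finrank_tangentLine _)
      (by rw [conic_inter_tangentLine, Set.ncard_singleton]) (mem_tangentLine_iff.mpr ?_)
    simp only [Matrix.cons_val]
    field_simp
    linear_combination hy
  · intro hns
    have hPC : conicForm ![h * μ ^ 2, μ, 1] ≠ 0 := by
      rw [conicForm_apply]
      simpa [sub_eq_zero, hμ] using hh1
    refine ⟨hPC, fun W _ hW hPW ↦ ?_⟩
    obtain ⟨c, hc⟩ := Set.ncard_eq_one.mp hW
    obtain ⟨hcC, hcW⟩ : conicForm c.rep = 0 ∧ c.submodule ≤ W := by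
      simpa using hc.ge (Set.mem_singleton c)
    by_cases hcP : polar conicForm c.rep ![h * μ ^ 2, μ, 1] = 0
    · exact hns (exists_sq_eq_one_sub_of_polar_eq_zero hμ c.rep_nonzero hcC hcP)
    · exact ncard_cone_inter_ne_one_of_polar_ne_zero _ hcC (submodule_le_iff.mp hcW) hPW hPC
        hcP hW
end

section
/- Let q be an odd prime power with q ≡ -1 (mod 4) and q ≥ 7, and let h ∈ 1 + Q₊ (i.e., h - 1 is a nonzero square) with h a non-square. Then the number of t ∈ {1, ..., q-2} such that ω^{2t}(h-1) + ω^t(2h+2) + (h-1) is a non-square of GF(q) is at least (q-1)/2, where ω is a fixed primitive element of GF(q)*. -/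
/-!
Put `k = h - 1` and `y = k x + h + 1`. Completing the square gives
`k ((h - 1) x² + (2h + 2) x + (h - 1)) = y² - 4h`, and `k` is a nonzero square, so the quadratic
is a non-square at `x` as soon as `y² - 4h` is. Since `4h` is a non-square, the hyperbola
`w² = y² - 4h` has `q - 1` points, two over each `y` for which `y² - 4h` is a square; hence
`y² - 4h` is a non-square for exactly `(q + 1) / 2` values of `y`. These include `y = 2h`
(`x = 1`, where `y² - 4h = 4h (h - 1)`) but not `y = h + 1` (`x = 0`), which leaves `(q - 1) / 2`
values `x ∉ {0, 1}`, and each of them is `ω ^ t` for some `1 ≤ t ≤ q - 2`.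
-/

open Finset

section

variable {F : Type*} [Field F]

section Finite

variable [Fintype F]

theorem card_sqrts_of_ne_zero [DecidableEq F] (hF : ringChar F ≠ 2) {a : F} (ha : a ≠ 0) :
    #{w : F | w ^ 2 = a} = if IsSquare a then 2 else 0 := by
  have h := quadraticChar_card_sqrts hF a
  rw [Set.toFinset_ofPred] at h
  split_ifs with hsq
  · rw [(quadraticChar_one_iff_isSquare ha).mpr hsq] at h
    exact_mod_cast h
  · rw [quadraticChar_neg_one_iff_not_isSquare.mpr hsq] at h
    omega

-- `u = p.1 + p.2` runs over `Fˣ`, since `(p.1 - p.2) (p.1 + p.2) = d`.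
theorem card_hyperbola [DecidableEq F] (h2 : (2 : F) ≠ 0) {d : F} (hd : d ≠ 0) :
    #{p : F × F | p.2 ^ 2 = p.1 ^ 2 - d} = Fintype.card F - 1 := by
  have hsum : ∀ p : F × F, p.2 ^ 2 = p.1 ^ 2 - d → p.1 + p.2 ≠ 0 := by
    intro p hp h0
    apply hd
    linear_combination (p.1 - p.2) * h0 + hp
  rw [← card_univ, ← card_erase_of_mem (mem_univ 0)]
  symm
  refine card_nbij' (fun u => ((u + d / u) / 2, (u - d / u) / 2)) (fun p => p.1 + p.2)
    ?_ ?_ ?_ ?_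
  · intro u hu
    have hu : u ≠ 0 := by simpa using hu
    simp only [coe_filter, mem_univ, true_and, Set.mem_ofPred_eq]
    field_simp
    ring
  · intro p hp
    simp only [coe_filter, mem_univ, true_and, Set.mem_ofPred_eq] at hp
    simpa using hsum p hp
  · intro u hu
    have hu : u ≠ 0 := by simpa using hu
    field_simp
    ring
  · intro p hp
    simp only [coe_filter, mem_univ, true_and, Set.mem_ofPred_eq] at hp
    have hne := hsum p hp
    have hquot : d / (p.1 + p.2) = p.1 - p.2 := by
      field_simp
      linear_combination hp
    simp only [hquot]
    ext <;> field_simp <;> ring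

theorem two_mul_card_isSquare_sq_sub [DecidableEq F] (hF : ringChar F ≠ 2) {d : F}
    (hd : ¬IsSquare d) :
    2 * #{y : F | IsSquare (y ^ 2 - d)} = Fintype.card F - 1 := by
  have hd0 : d ≠ 0 := by rintro rfl; exact hd ⟨0, by ring⟩
  have hval : ∀ y : F, y ^ 2 - d ≠ 0 := fun y h0 =>
    hd ⟨y, by rw [← sq]; exact (sub_eq_zero.mp h0).symm⟩
  rw [← card_hyperbola (Ring.two_ne_zero hF) hd0, card_filter, card_filter,
    Fintype.sum_prod_type, mul_sum]
  refine sum_congr rfl fun y _ => ?_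
  rw [← card_filter, card_sqrts_of_ne_zero hF (hval y)]
  split_ifs <;> rfl

theorem ncard_le_ncard_pow_of_forall_exists_pow_eq {ω : F}
    (hω : ∀ x : F, x ≠ 0 → ∃ n : ℕ, ω ^ n = x) (P : F → Prop) :
    {x : F | x ≠ 0 ∧ x ≠ 1 ∧ P x}.ncard ≤
      {t : ℕ | 1 ≤ t ∧ t ≤ Fintype.card F - 2 ∧ P (ω ^ t)}.ncard := by
  refine (Set.ncard_le_ncard ?_).trans (Set.ncard_image_le (f := (ω ^ ·)) ?_)
  · rintro x ⟨hx0, hx1, hPx⟩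
    obtain ⟨n, rfl⟩ := hω x hx0
    have hω0 : ω ≠ 0 := by rintro rfl; rcases n with _ | n <;> simp_all
    have hcard : 1 < Fintype.card F := Fintype.one_lt_card
    have hmod : ω ^ n = ω ^ (n % (Fintype.card F - 1)) :=
      pow_eq_pow_mod n (FiniteField.pow_card_sub_one_eq_one ω hω0)
    have hpos : n % (Fintype.card F - 1) ≠ 0 := by
      intro h0
      rw [h0, pow_zero] at hmod
      exact hx1 hmod
    refine ⟨n % (Fintype.card F - 1), ⟨by omega, ?_, hmod ▸ hPx⟩, hmod.symm⟩
    have := Nat.mod_lt n (show 0 < Fintype.card F - 1 by omega)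
    omega
  · exact (Set.finite_Iic _).subset fun t ht => ht.2.1

end Finite

/-- The line `X₀ = x X₂` meets the conic where `X₁² = conicQuad h x · X₂²`, so it is external
exactly when `conicQuad h x` is a non-square. -/
def conicQuad (h x : F) : F := x ^ 2 * (h - 1) + x * (2 * h + 2) + (h - 1)

theorem sub_one_mul_conicQuad (h x : F) :
    (h - 1) * conicQuad h x = ((h - 1) * x + (h + 1)) ^ 2 - 4 * h := by
  unfold conicQuad
  ring

theorem conicQuad_nonsquare {h s x : F} (hs : s ^ 2 = h - 1)
    (hx : ¬IsSquare (((h - 1) * x + (h + 1)) ^ 2 - 4 * h)) :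
    conicQuad h x ≠ 0 ∧ ¬∃ y, y ^ 2 = conicQuad h x := by
  rw [← sub_one_mul_conicQuad] at hx
  refine ⟨fun h0 => hx ?_, fun ⟨y, hy⟩ => hx ⟨s * y, ?_⟩⟩
  · rw [h0, mul_zero]
    exact IsSquare.zero
  · rw [← hy, ← hs]
    ring

theorem card_sub_one_div_two_le_ncard_conicQuad_nonsquare [Fintype F] (hF : ringChar F ≠ 2)
    {h : F} (hk : ∃ s : F, s ≠ 0 ∧ s ^ 2 = h - 1) (hns : ¬IsSquare h) :
    (Fintype.card F - 1) / 2 ≤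
      {x : F | x ≠ 0 ∧ x ≠ 1 ∧ (conicQuad h x ≠ 0 ∧ ¬∃ y, y ^ 2 = conicQuad h x)}.ncard := by
  classical
  obtain ⟨s, hs0, hs⟩ := hk
  have hk0 : h - 1 ≠ 0 := hs ▸ pow_ne_zero 2 hs0
  have h4 : ¬IsSquare (4 * h) := by
    rintro ⟨r, hr⟩
    refine hns ⟨r / 2, ?_⟩
    field_simp [Ring.two_ne_zero hF]
    linear_combination hr
  have hsquares := two_mul_card_isSquare_sq_sub hF h4
  have hsplit := card_filter_add_card_filter_not (s := univ)
    (fun y : F => IsSquare (y ^ 2 - 4 * h))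
  rw [card_univ] at hsplit
  set Y := ({y | ¬IsSquare (y ^ 2 - 4 * h)} : Finset F)
  have hY : #Y - 1 ≤ #(Y.erase (2 * h)) := pred_card_le_card_erase
  have hinj : #(Y.erase (2 * h)) ≤
      {x : F | x ≠ 0 ∧ x ≠ 1 ∧ (conicQuad h x ≠ 0 ∧ ¬∃ y, y ^ 2 = conicQuad h x)}.ncard := by
    rw [← Set.ncard_coe_finset]
    refine Set.ncard_le_ncard_of_injOn (fun y => (y - (h + 1)) / (h - 1)) ?_ ?_ (Set.toFinite _)
    · intro y hy
      simp only [coe_erase, coe_filter, mem_univ, true_and, Set.mem_sdiff, Set.mem_ofPred_eq,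
        Set.mem_singleton_iff, Y] at hy
      obtain ⟨hy, hy2h⟩ := hy
      have hx : (h - 1) * ((y - (h + 1)) / (h - 1)) + (h + 1) = y := by
        field_simp
        ring
      refine ⟨fun h0 => hy ⟨h - 1, ?_⟩, fun h1 => hy2h ?_, conicQuad_nonsquare hs (by rwa [hx])⟩
      · rw [← hx, h0]
        ring
      · rw [← hx, h1]
        ring
    · intro y₁ _ y₂ _ heq
      simpa [div_left_inj' hk0] using heq
  omega

end

theorem stmt13_general (q : ℕ)
    (F : Type*) [Field F] [Fintype F] (hcard : Fintype.card F = q)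
    (ω : F) (hω : ∀ x : F, x ≠ 0 → ∃ n : ℕ, ω ^ n = x)
    (h : F) (hh : ∃ s : F, s ≠ 0 ∧ s ^ 2 = h - 1) (hns : ¬ ∃ y : F, y ^ 2 = h) :
    (q - 1) / 2 ≤ Set.ncard {t : ℕ | 1 ≤ t ∧ t ≤ q - 2 ∧
      (ω ^ (2 * t) * (h - 1) + ω ^ t * (2 * h + 2) + (h - 1) ≠ 0 ∧
        ¬ ∃ y : F, y ^ 2 = ω ^ (2 * t) * (h - 1) + ω ^ t * (2 * h + 2) + (h - 1))} := by
  have hsq : ¬IsSquare h := fun ⟨r, hr⟩ => hns ⟨r, by rw [hr, sq]⟩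
  have hF : ringChar F ≠ 2 := fun h2 => hsq (FiniteField.isSquare_of_char_two h2 h)
  subst hcard
  simp_rw [pow_mul']
  exact (card_sub_one_div_two_le_ncard_conicQuad_nonsquare hF hh hsq).trans
    (ncard_le_ncard_pow_of_forall_exists_pow_eq hω _)

/-- For `q ≡ -1 (mod 4)`, `q ≥ 7`, `ω` a primitive element of `GF(q)*`, and `h` a
non-square with `h - 1` a nonzero square: the number of `t ∈ {1,…,q-2}` such that
`ω^{2t}(h-1) + ω^t(2h+2) + (h-1)` is a non-square is at least `(q-1)/2`. -/
theorem stmt13 (q : ℕ) (h4 : q % 4 = 3) (hq7 : 7 ≤ q)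
    (F : Type*) [Field F] [Fintype F] (hcard : Fintype.card F = q)
    (ω : F) (hω : ∀ x : F, x ≠ 0 → ∃ n : ℕ, ω ^ n = x)
    (h : F) (hh : ∃ s : F, s ≠ 0 ∧ s ^ 2 = h - 1) (hns : ¬ ∃ y : F, y ^ 2 = h) :
    (q - 1) / 2 ≤ Set.ncard {t : ℕ | 1 ≤ t ∧ t ≤ q - 2 ∧
      (ω ^ (2 * t) * (h - 1) + ω ^ t * (2 * h + 2) + (h - 1) ≠ 0 ∧
        ¬ ∃ y : F, y ^ 2 = ω ^ (2 * t) * (h - 1) + ω ^ t * (2 * h + 2) + (h - 1))} :=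
  stmt13_general q F hcard ω hω h hh hns
end
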